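/- arXiv:1812.01751 — 2 statements merged into one kernel-verified Lean document; each statement's English description precedes it below -/
import Mathlib

section
/- The pdf of the distance between two independent points uniformly distributed in a disk of radius R, f_CI(r) = (4r/(π R^2)) arccos(r/(2R)) − (2r^2/(π R^4)) √(R^2 − r^2/4) for 0 ≤ r ≤ 2R, integrates to 1 over [0, 2R]. -/
open Real intervalIntegral Set

/-!
Substituting `r = 2Ru` turns the integrand into `8 / (π R) * (u arccos u - u² √(1 - u²))`,
whose integral over `[0, 1]` is `π / 16`: an antiderivative is
`u² arccos u / 2 + arcsin u / 8 - u (1 + 2u²) √(1 - u²) / 8`, found by integrating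
`u arccos u` by parts and `u² √(1 - u²)` by `u = sin θ`.
-/

theorem hasDerivAt_primitive_mul_arccos_sub_sq_mul_sqrt {u : ℝ} (hu : u ∈ Ioo (-1 : ℝ) 1) :
    HasDerivAt (fun v => v ^ 2 / 2 * arccos v + arcsin v / 8
        - v * (1 + 2 * v ^ 2) / 8 * √(1 - v ^ 2))
      (u * arccos u - u ^ 2 * √(1 - u ^ 2)) u := by
  obtain ⟨hu₁, hu₂⟩ := hu
  have hpos : 0 < 1 - u ^ 2 := by nlinarith
  have hs2 : √(1 - u ^ 2) ^ 2 = 1 - u ^ 2 := sq_sqrt hpos.le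
  have hsqrt : HasDerivAt (fun v => √(1 - v ^ 2)) (-u / √(1 - u ^ 2)) u := by
    refine ((hasDerivAt_pow 2 u).const_sub 1).sqrt hpos.ne' |>.congr_deriv ?_
    field_simp
    ring
  have hpoly : HasDerivAt (fun v : ℝ => v * (1 + 2 * v ^ 2) / 8) ((1 + 6 * u ^ 2) / 8) u := by
    refine ((hasDerivAt_id' u).mul ((hasDerivAt_pow 2 u).const_mul 2 |>.const_add 1)).div_const 8
      |>.congr_deriv ?_
    ring
  have hne₁ : u ≠ -1 := by linarith
  have hne₂ : u ≠ 1 := by linarith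
  refine ((((hasDerivAt_pow 2 u).div_const 2).mul (hasDerivAt_arccos hne₁ hne₂)).add
    ((hasDerivAt_arcsin hne₁ hne₂).div_const 8)).sub (hpoly.mul hsqrt) |>.congr_deriv ?_
  field_simp
  linear_combination (4 * u ^ 2 - 2) * hs2

theorem integral_mul_arccos_sub_sq_mul_sqrt :
    ∫ u in (0 : ℝ)..1, (u * arccos u - u ^ 2 * √(1 - u ^ 2)) = π / 16 := by
  rw [integral_eq_sub_of_hasDerivAt_of_le zero_le_one (by fun_prop)
    (fun u hu => hasDerivAt_primitive_mul_arccos_sub_sq_mul_sqrt ⟨by linarith [hu.1], hu.2⟩)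
    (by apply Continuous.intervalIntegrable; fun_prop)]
  norm_num
  ring

theorem fCI_integrand_eq_rescaled {R : ℝ} (hR : 0 < R) (r : ℝ) :
    (4 * r / (π * R ^ 2)) * arccos (r / (2 * R)) - (2 * r ^ 2 / (π * R ^ 4)) * √(R ^ 2 - r ^ 2 / 4)
      = 8 / (π * R) * ((r / (2 * R)) * arccos (r / (2 * R))
        - (r / (2 * R)) ^ 2 * √(1 - (r / (2 * R)) ^ 2)) := by
  have hsqrt : √(R ^ 2 - r ^ 2 / 4) = R * √(1 - (r / (2 * R)) ^ 2) := by
    rw [← sqrt_sq hR.le, ← sqrt_mul (sq_nonneg R), sqrt_sq hR.le]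
    congr 1
    field_simp
    ring
  rw [hsqrt]
  field_simp
  ring

/-- The pdf of the distance between two independent uniform points in a disk of
radius `R` integrates to 1 over `[0, 2R]`. -/
theorem fCI_integrates_to_one (R : ℝ) (hR : 0 < R) :
    (∫ r in (0 : ℝ)..(2 * R),
        (4 * r / (π * R ^ 2)) * Real.arccos (r / (2 * R))
          - (2 * r ^ 2 / (π * R ^ 4)) * Real.sqrt (R ^ 2 - r ^ 2 / 4)) = 1 := by
  have h2R : 2 * R ≠ 0 := by positivity
  simp_rw [fCI_integrand_eq_rescaled hR]
  rw [integral_const_mul, integral_comp_div (fun u => u * arccos u - u ^ 2 * √(1 - u ^ 2)) h2R,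
    zero_div, div_self h2R, integral_mul_arccos_sub_sq_mul_sqrt, smul_eq_mul]
  field_simp
  ring
end

section
/- The CDF of the distance between two independent uniform points in a disk of radius R is Ψ(r) = (1/π)(4 arccsc(2R/r) + 2(r/R)^2 arcsec(2R/r) − 2 arctan(r/√(4R^2 − r^2)) − r(r^2 + 2R^2)√(4R^2 − r^2)/(4R^4)) for 0 ≤ r < 2R; i.e., Ψ(r) = ∫_0^r f_CI(t) dt with f_CI as defined, and Ψ(r) → 1 as r → 2R. -/
/-!
With `u = r / (2R)` the claimed CDF is `diskDistCDF u = G(u) / π`, where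
`G(u) = 2 arcsin u + 8u² arccos u − 2u(1 + 2u²)√(1 − u²)`: the `arctan` term is
`arctan (u / √(1 − u²)) = arcsin u`. Since `G'(u) = 16u (arccos u − u√(1 − u²))`, the chain rule
makes `r ↦ G(r / (2R)) / π` an antiderivative of `f_CI` on `(−2R, 2R)`, vanishing at `0`, and
`G(1) = π` gives the limit `1` at `2R` by continuity.
-/

open Real intervalIntegral Filter Topology

noncomputable def diskDistCDF (u : ℝ) : ℝ :=
  (2 * arcsin u + 8 * u ^ 2 * arccos u - 2 * u * (1 + 2 * u ^ 2) * √(1 - u ^ 2)) / π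

lemma sqrt_sq_sub_sq {a : ℝ} (ha : 0 < a) (x : ℝ) :
    √(a ^ 2 - x ^ 2) = a * √(1 - (x / a) ^ 2) := by
  rw [show a ^ 2 - x ^ 2 = a ^ 2 * (1 - (x / a) ^ 2) by field_simp, sqrt_mul (by positivity),
    sqrt_sq ha.le]

lemma continuous_diskDistCDF : Continuous diskDistCDF := by
  unfold diskDistCDF; fun_prop

lemma diskDistCDF_zero : diskDistCDF 0 = 0 := by simp [diskDistCDF]

lemma diskDistCDF_one : diskDistCDF 1 = 1 := by
  simp only [diskDistCDF, arcsin_one, arccos_one]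
  field_simp
  norm_num

lemma hasDerivAt_diskDistCDF {u : ℝ} (h₁ : -1 < u) (h₂ : u < 1) :
    HasDerivAt diskDistCDF (16 * u * (arccos u - u * √(1 - u ^ 2)) / π) u := by
  have hpos : 0 < 1 - u ^ 2 := by nlinarith
  have hsqrt : HasDerivAt (fun x => √(1 - x ^ 2)) (-(2 * u) / (2 * √(1 - u ^ 2))) u := by
    simpa using ((hasDerivAt_pow 2 u).const_sub 1).sqrt hpos.ne'
  have h := ((((hasDerivAt_arcsin h₁.ne' h₂.ne).const_mul 2).add
    (((hasDerivAt_pow 2 u).const_mul 8).mul (hasDerivAt_arccos h₁.ne' h₂.ne))).sub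
    ((((hasDerivAt_id u).const_mul 2).mul (((hasDerivAt_pow 2 u).const_mul 2).const_add 1)).mul
      hsqrt)).div_const π
  refine h.congr_deriv ?_
  have hs : √(1 - u ^ 2) ^ 2 = 1 - u ^ 2 := sq_sqrt hpos.le
  have hs0 : 0 < √(1 - u ^ 2) := sqrt_pos.2 hpos
  simp only [Pi.mul_apply, id, Nat.cast_ofNat]
  field_simp
  linear_combination (4 * u ^ 2 - 2) * hs

lemma hasDerivAt_diskDistCDF_div {R t : ℝ} (hR : 0 < R) (h₁ : -(2 * R) < t) (h₂ : t < 2 * R) :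
    HasDerivAt (fun x => diskDistCDF (x / (2 * R)))
      ((4 * t / (π * R ^ 2)) * arccos (t / (2 * R))
        - (2 * t ^ 2 / (π * R ^ 4)) * √(R ^ 2 - t ^ 2 / 4)) t := by
  have h2R : 0 < 2 * R := by positivity
  have h := (hasDerivAt_diskDistCDF ((lt_div_iff₀ h2R).2 (by linarith))
    ((div_lt_one h2R).2 h₂)).comp t ((hasDerivAt_id t).div_const (2 * R))
  refine h.congr_deriv ?_
  rw [show R ^ 2 - t ^ 2 / 4 = R ^ 2 - (t / 2) ^ 2 by ring, sqrt_sq_sub_sq hR, div_div,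
    mul_comm 2 R]
  field_simp
  ring

lemma diskDistCDF_div_eq {R r : ℝ} (hR : 0 < R) (h₁ : -(2 * R) < r) (h₂ : r < 2 * R) :
    (1 / π) * (4 * arcsin (r / (2 * R))
        + 2 * (r / R) ^ 2 * arccos (r / (2 * R))
        - 2 * arctan (r / √(4 * R ^ 2 - r ^ 2))
        - r * (r ^ 2 + 2 * R ^ 2) * √(4 * R ^ 2 - r ^ 2) / (4 * R ^ 4))
      = diskDistCDF (r / (2 * R)) := by
  have h2R : 0 < 2 * R := by positivity
  have hu : r / (2 * R) ∈ Set.Ioo (-1) 1 :=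
    ⟨(lt_div_iff₀ h2R).2 (by linarith), (div_lt_one h2R).2 h₂⟩
  rw [show 4 * R ^ 2 - r ^ 2 = (2 * R) ^ 2 - r ^ 2 by ring, sqrt_sq_sub_sq h2R,
    show r / (2 * R * √(1 - (r / (2 * R)) ^ 2)) = r / (2 * R) / √(1 - (r / (2 * R)) ^ 2) by
      rw [div_div], ← arcsin_eq_arctan hu, diskDistCDF]
  field_simp
  ring

/-- The CDF of the distance between two independent uniform points in a disk of radius
`R` is `Ψ(r) = (1/π)(4 arccsc(2R/r) + 2(r/R)^2 arcsec(2R/r) − 2 arctan(r/√(4R^2 − r^2))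
− r(r^2 + 2R^2)√(4R^2 − r^2)/(4R^4))` for `0 ≤ r < 2R` (where
`arccsc(2R/r) = arcsin(r/(2R))` and `arcsec(2R/r) = arccos(r/(2R))`), i.e.
`Ψ(r) = ∫_0^r f_CI(t) dt`, and `Ψ(r) → 1` as `r → 2R` from below. -/
theorem fCI_cdf (R : ℝ) (hR : 0 < R) :
    (∀ r : ℝ, 0 ≤ r → r < 2 * R →
      (∫ t in (0 : ℝ)..r,
          (4 * t / (π * R ^ 2)) * Real.arccos (t / (2 * R))
            - (2 * t ^ 2 / (π * R ^ 4)) * Real.sqrt (R ^ 2 - t ^ 2 / 4))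
        = (1 / π) * (4 * Real.arcsin (r / (2 * R))
            + 2 * (r / R) ^ 2 * Real.arccos (r / (2 * R))
            - 2 * Real.arctan (r / Real.sqrt (4 * R ^ 2 - r ^ 2))
            - r * (r ^ 2 + 2 * R ^ 2) * Real.sqrt (4 * R ^ 2 - r ^ 2) / (4 * R ^ 4))) ∧
    Tendsto (fun r : ℝ => (1 / π) * (4 * Real.arcsin (r / (2 * R))
        + 2 * (r / R) ^ 2 * Real.arccos (r / (2 * R))
        - 2 * Real.arctan (r / Real.sqrt (4 * R ^ 2 - r ^ 2))
        - r * (r ^ 2 + 2 * R ^ 2) * Real.sqrt (4 * R ^ 2 - r ^ 2) / (4 * R ^ 4)))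
      (nhdsWithin (2 * R) (Set.Iio (2 * R))) (nhds 1) := by
  constructor
  · intro r hr₀ hr
    rw [integral_eq_sub_of_hasDerivAt (f := fun x => diskDistCDF (x / (2 * R)))
      (fun t ht => by
        rw [Set.uIcc_of_le hr₀] at ht
        exact hasDerivAt_diskDistCDF_div hR (by linarith [ht.1]) (ht.2.trans_lt hr))
      (Continuous.intervalIntegrable (by fun_prop) _ _),
      diskDistCDF_div_eq hR (by linarith) hr, zero_div, diskDistCDF_zero, sub_zero]
  · have h2R : (2 * R) / (2 * R) = 1 := div_self (by positivity)
    have hlim : Tendsto (fun r => diskDistCDF (r / (2 * R))) (𝓝[<] (2 * R)) (𝓝 1) := by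
      rw [← diskDistCDF_one, ← h2R]
      exact ((continuous_diskDistCDF.comp (continuous_id.div_const _)).tendsto _).mono_left
        nhdsWithin_le_nhds
    refine hlim.congr' ?_
    filter_upwards [self_mem_nhdsWithin, eventually_nhdsWithin_of_eventually_nhds
      (eventually_gt_nhds (by positivity : (0 : ℝ) < 2 * R))] with r hr hr₀
    exact (diskDistCDF_div_eq hR (by linarith) hr).symm
end
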